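/- Let q, α ∈ (0,1), let n0 be an integer, and let y : ℤ → ℝ encode a function on T_q. Suppose y(n0) ≤ 0 and y is decreasing, i.e. y(n−1) ≤ y(n) for every integer n ≤ n0. Then S_y(n) − S_y(n+1) ≤ 0 for every integer n < n0 (i.e. the Riemann q-fractional derivative (_q∇_{qa}^{α} y)(q^n) of order α based at qa, a = q^{n0}, is nonpositive at every point t = q^n with n < n0). -/

import Mathlib

/-!
The product defining `(q^m - q^m)_q^{-α}` has the factor `1 - q^0 = 0`, so the term `i = n` may be
added to `S_y(n+1)` and `S_y(n) - S_y(n+1) = Σ_{i=n}^{n0} c_i y(i)` with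
`c_i = q^i ((q^n - q^{i+1})_q^{-α} - (q^{n+1} - q^{i+1})_q^{-α})`. The infinite product
`P(d) = ∏_j (1 - q^{d+j}) / (1 - q^{d+j-α})` satisfies `(1 - q^{d-α}) P(d) = (1 - q^d) P(d+1)`,
which makes the partial sums telescope: `Σ_{i=n}^{k} c_i = q^n (q^n - q^{k+1})_q^{-α} ≥ 0`.
Abel summation against `y`, nondecreasing in the index and with `y(n0) ≤ 0`, gives the sign.
-/

/-- The q-factorial power `(q^m - q^k)_q^{-α}` for integers `m < k`, defined by the
convergent infinite product
`q^{-mα} · ∏_{j=0}^∞ (1 - q^{k-m+j}) / (1 - q^{k-m+j-α})`. -/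
noncomputable def qFac (q α : ℝ) (m k : ℤ) : ℝ :=
  q ^ (-(m : ℝ) * α) *
    ∏' j : ℕ, (1 - q ^ (((k - m : ℤ) : ℝ) + (j : ℝ))) /
      (1 - q ^ (((k - m : ℤ) : ℝ) + (j : ℝ) - α))

/-- `S q α n0 y n = Σ_{i=n}^{n0} q^i (q^n - q^{i+1})_q^{-α} y(i)`; for `n = n0 + 1`
the range is empty, so `S q α n0 y (n0+1) = 0`.  The Riemann q-fractional derivative
of order `α` based at `qa = q^{n0+1}`, evaluated at `t = q^n`, is
`(S q α n0 y n - S q α n0 y (n+1)) / ((1-q) q^n Γ_q(1-α))`,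
whose sign is that of `S q α n0 y n - S q α n0 y (n+1)`. -/
noncomputable def S (q α : ℝ) (n0 : ℤ) (y : ℤ → ℝ) (n : ℤ) : ℝ :=
  ∑ i ∈ Finset.Icc n n0, q ^ (i : ℝ) * qFac q α n (i + 1) * y i

open Finset Real

theorem sum_Icc_mul_le_of_partialSum_nonneg {R : Type*} [Semiring R] [PartialOrder R]
    [IsOrderedRing R] {c y : ℤ → R} {n k : ℤ} (hnk : n ≤ k)
    (hc : ∀ j, n ≤ j → j < k → 0 ≤ ∑ i ∈ Icc n j, c i)
    (hy : ∀ j, n ≤ j → j < k → y j ≤ y (j + 1)) :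
    ∑ i ∈ Icc n k, c i * y i ≤ (∑ i ∈ Icc n k, c i) * y k := by
  induction k, hnk using Int.leInduction with
  | base => simp
  | succ k hnk ih =>
    have hmem : k + 1 ∉ Icc n k := by simp
    rw [← insert_Icc_right_eq_Icc_add_one (by omega), sum_insert hmem, sum_insert hmem, add_mul]
    have hstep := mul_le_mul_of_nonneg_left (hy k hnk (by omega)) (hc k hnk (by omega))
    have hprev := ih (fun j hj _ => hc j hj (by omega)) (fun j hj _ => hy j hj (by omega))
    exact add_le_add_right (hprev.trans hstep) _

noncomputable def qFacProd (q α d : ℝ) : ℝ :=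
  ∏' j : ℕ, (1 - q ^ (d + j)) / (1 - q ^ (d + j - α))

section qFacProd

variable {q α d : ℝ}

theorem qFac_eq_qFacProd (m k : ℤ) :
    qFac q α m k = q ^ (-(m : ℝ) * α) * qFacProd q α (k - m : ℤ) :=
  rfl

theorem qFacProd_zero : qFacProd q α 0 = 0 :=
  tprod_of_exists_eq_zero ⟨0, by simp⟩

theorem multipliable_qFacProd (hq0 : 0 < q) (hq1 : q < 1) (hd : α < d) :
    Multipliable fun j : ℕ => (1 - q ^ (d + j)) / (1 - q ^ (d + j - α)) := by
  set C := |q ^ (d - α) * (1 - q ^ α)| / (1 - q ^ (d - α))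
  have hlt : ∀ j : ℕ, q ^ (d - α) * q ^ j < 1 := fun j => by
    rw [← rpow_natCast, ← rpow_add hq0]
    exact rpow_lt_one hq0.le hq1 (by positivity)
  have hC : 0 < 1 - q ^ (d - α) := by simpa using sub_pos.2 (hlt 0)
  have hfactor : ∀ j : ℕ, (1 - q ^ (d + j)) / (1 - q ^ (d + j - α)) =
      1 + q ^ j * (q ^ (d - α) * (1 - q ^ α) / (1 - q ^ (d - α) * q ^ j)) := fun j => by
    have hsplit : q ^ (d + j) = q ^ (d - α) * q ^ j * q ^ α := by
      rw [← rpow_natCast, ← rpow_add hq0, ← rpow_add hq0]; ring_nf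
    have hsplit' : q ^ (d + j - α) = q ^ (d - α) * q ^ j := by
      rw [← rpow_natCast, ← rpow_add hq0]; ring_nf
    have := (sub_pos.2 (hlt j)).ne'
    rw [hsplit, hsplit']
    field_simp
    ring
  simp_rw [hfactor]
  refine Real.multipliable_one_add_of_summable <|
    ((summable_geometric_of_lt_one hq0.le hq1).mul_left C).of_norm_bounded fun j => ?_
  rw [norm_mul, norm_div, Real.norm_eq_abs, Real.norm_eq_abs, Real.norm_eq_abs,
    abs_of_pos (pow_pos hq0 j), abs_of_pos (sub_pos.2 (hlt j)), mul_comm C]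
  refine mul_le_mul_of_nonneg_left (div_le_div_of_nonneg_left (abs_nonneg _) hC ?_)
    (by positivity)
  have : q ^ j ≤ 1 := pow_le_one₀ hq0.le hq1.le
  nlinarith [rpow_pos_of_pos hq0 (d - α)]

theorem qFacProd_recurrence (hq0 : 0 < q) (hq1 : q < 1) (hd : α < d) :
    (1 - q ^ (d - α)) * qFacProd q α d = (1 - q ^ d) * qFacProd q α (d + 1) := by
  have hshift :
      (fun j : ℕ => (1 - q ^ (d + (j + 1 : ℕ))) / (1 - q ^ (d + (j + 1 : ℕ) - α))) =
      fun j : ℕ => (1 - q ^ (d + 1 + j)) / (1 - q ^ (d + 1 + j - α)) := by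
    ext j; push_cast; ring_nf
  have hden : 1 - q ^ (d - α) ≠ 0 := (sub_pos.2 (rpow_lt_one hq0.le hq1 (by linarith))).ne'
  rw [qFacProd, qFacProd,
    tprod_eq_zero_mul' (hshift ▸ multipliable_qFacProd hq0 hq1 (by linarith)), hshift]
  simp only [Nat.cast_zero, add_zero]
  field_simp

theorem qFacProd_nonneg (hq0 : 0 < q) (hq1 : q < 1) (hd0 : 0 ≤ d) (hd : α < d) :
    0 ≤ qFacProd q α d :=
  tprod_nonneg fun j => div_nonneg (sub_nonneg.2 (rpow_le_one hq0.le hq1.le (by positivity)))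
    (sub_pos.2 (rpow_lt_one hq0.le hq1 (by linarith [j.cast_nonneg (α := ℝ)]))).le

end qFacProd

section qFac

variable {q α : ℝ}

theorem qFac_self (m : ℤ) : qFac q α m m = 0 := by
  simp [qFac_eq_qFacProd, qFacProd_zero]

theorem qFac_add_one_add_one (hq0 : 0 < q) (m k : ℤ) :
    qFac q α (m + 1) (k + 1) = q ^ (-α) * qFac q α m k := by
  rw [qFac_eq_qFacProd, qFac_eq_qFacProd, show k + 1 - (m + 1) = k - m by ring, ← mul_assoc,
    ← rpow_add hq0]
  push_cast; ring_nf

theorem qFac_nonneg (hq0 : 0 < q) (hq1 : q < 1) (hα1 : α < 1) {m k : ℤ} (hmk : m < k) :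
    0 ≤ qFac q α m k := by
  have : (1 : ℝ) ≤ (k - m : ℤ) := by exact_mod_cast (by omega : (1 : ℤ) ≤ k - m)
  exact mul_nonneg (rpow_nonneg hq0.le _) (qFacProd_nonneg hq0 hq1 (by linarith) (by linarith))

theorem qFac_recurrence (hq0 : 0 < q) (hq1 : q < 1) (hα1 : α < 1) {m k : ℤ} (hmk : m < k) :
    (1 - q ^ ((k - m : ℤ) - α)) * qFac q α m k =
      (1 - q ^ ((k - m : ℤ) : ℝ)) * qFac q α m (k + 1) := by
  have : (1 : ℝ) ≤ (k - m : ℤ) := by exact_mod_cast (by omega : (1 : ℤ) ≤ k - m)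
  rw [qFac_eq_qFacProd, qFac_eq_qFacProd, mul_left_comm,
    qFacProd_recurrence hq0 hq1 (by linarith),
    show ((k + 1 - m : ℤ) : ℝ) = (k - m : ℤ) + 1 by push_cast; ring]
  ring

theorem sum_Icc_qFac_sub_qFac (hq0 : 0 < q) (hq1 : q < 1) (hα1 : α < 1) {n k : ℤ}
    (hnk : n ≤ k) :
    ∑ i ∈ Icc n k, q ^ (i : ℝ) * (qFac q α n (i + 1) - qFac q α (n + 1) (i + 1)) =
      q ^ (n : ℝ) * qFac q α n (k + 1) := by
  induction k, hnk using Int.leInduction with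
  | base => simp [qFac_self]
  | succ k hnk ih =>
    rw [← insert_Icc_right_eq_Icc_add_one (by omega), sum_insert (by simp), ih,
      qFac_add_one_add_one hq0]
    have hrec := qFac_recurrence hq0 hq1 hα1 (m := n) (k := k + 1) (by omega)
    have hsplit : q ^ ((k + 1 : ℤ) : ℝ) = q ^ (n : ℝ) * q ^ ((k + 1 - n : ℤ) : ℝ) := by
      rw [← rpow_add hq0]; push_cast; ring_nf
    have hsplit' :
        q ^ (((k + 1 - n : ℤ) : ℝ) - α) = q ^ ((k + 1 - n : ℤ) : ℝ) * q ^ (-α) := by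
      rw [← rpow_add hq0]; ring_nf
    rw [hsplit]
    rw [hsplit'] at hrec
    linear_combination q ^ (n : ℝ) * hrec

theorem S_sub_S_add_one (n0 : ℤ) (y : ℤ → ℝ) (n : ℤ) :
    S q α n0 y n - S q α n0 y (n + 1) =
      ∑ i ∈ Icc n n0,
        q ^ (i : ℝ) * (qFac q α n (i + 1) - qFac q α (n + 1) (i + 1)) * y i := by
  have hext : S q α n0 y (n + 1) =
      ∑ i ∈ Icc n n0, q ^ (i : ℝ) * qFac q α (n + 1) (i + 1) * y i := by
    refine sum_subset (Icc_subset_Icc_left (by omega)) fun i hi hi' => ?_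
    obtain rfl : i = n := by simp only [mem_Icc] at hi hi'; omega
    simp [qFac_self]
  rw [S, hext, ← sum_sub_distrib]
  exact sum_congr rfl fun i _ => by ring

end qFac

theorem qFrac_nonpos_of_decreasing_general (q α : ℝ) (hq0 : 0 < q) (hq1 : q < 1)
    (hα1 : α < 1) (n0 : ℤ) (y : ℤ → ℝ)
    (hy : y n0 ≤ 0)
    (hdec : ∀ n : ℤ, n ≤ n0 → y (n - 1) ≤ y n) :
    ∀ n : ℤ, n < n0 → S q α n0 y n - S q α n0 y (n + 1) ≤ 0 := by
  intro n hn
  have hkernel : ∀ j, n ≤ j → 0 ≤ q ^ (n : ℝ) * qFac q α n (j + 1) := fun j hj =>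
    mul_nonneg (rpow_nonneg hq0.le _) (qFac_nonneg hq0 hq1 hα1 (by omega))
  rw [S_sub_S_add_one]
  refine (sum_Icc_mul_le_of_partialSum_nonneg hn.le
    (fun j hj _ => (sum_Icc_qFac_sub_qFac hq0 hq1 hα1 hj).symm ▸ hkernel j hj)
    (fun j _ hj => by simpa using hdec (j + 1) (by omega))).trans ?_
  rw [sum_Icc_qFac_sub_qFac hq0 hq1 hα1 hn.le]
  exact mul_nonpos_of_nonneg_of_nonpos (hkernel n0 hn.le) hy

/-- If `y(a) ≤ 0` (with `a = q^{n0}`) and `y` is decreasing on `T_q`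
(i.e. `y(q^{n-1}) ≤ y(q^n)`), then the Riemann q-fractional derivative of order
`α ∈ (0,1)` based at `qa` is nonpositive at every `t = q^n`, `n < n0`. -/
theorem qFrac_nonpos_of_decreasing (q α : ℝ) (hq0 : 0 < q) (hq1 : q < 1)
    (hα0 : 0 < α) (hα1 : α < 1) (n0 : ℤ) (y : ℤ → ℝ)
    (hy : y n0 ≤ 0)
    (hdec : ∀ n : ℤ, n ≤ n0 → y (n - 1) ≤ y n) :
    ∀ n : ℤ, n < n0 → S q α n0 y n - S q α n0 y (n + 1) ≤ 0 :=
  qFrac_nonpos_of_decreasing_general q α hq0 hq1 hα1 n0 y hy hdec
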